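/- Suppose {a_s + n_s ℤ}_{s=1}^k forms an m-cover of ℤ but {a_s + n_s ℤ}_{s=1}^{k−1} does not, and suppose the covering function w_A(x) = |{1 ≤ s ≤ k : x ∈ a_s + n_s ℤ}| is periodic with period n_k. Then for every r with 0 ≤ r ≤ n_k − 1, the number of subsets I ⊆ {1,...,k−1} such that the fractional part of Σ_{s∈I} 1/n_s equals r/n_k is at least 2^{m−1}. -/

import Mathlib

open Finset

open Finset

noncomputable def EE (q : ℚ) : ℂ := Complex.exp (2 * Real.pi * Complex.I * q)

lemma EE_add (p q : ℚ) : EE (p + q) = EE p * EE q := by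
  rw [EE, EE, EE, ← Complex.exp_add]
  push_cast
  ring_nf

lemma EE_intCast (z : ℤ) : EE z = 1 := by
  rw [EE]
  rw [show ((2 : ℂ) * Real.pi * Complex.I * (z : ℚ)) = (z : ℤ) * (2 * Real.pi * Complex.I) by push_cast; ring]
  exact Complex.exp_int_mul_two_pi_mul_I z

lemma EE_ne_zero (q : ℚ) : EE q ≠ 0 := Complex.exp_ne_zero _

lemma EE_eq_one_iff (q : ℚ) : EE q = 1 ↔ ∃ z : ℤ, q = z := by
  rw [EE, Complex.exp_eq_one_iff]
  constructor
  · rintro ⟨nn, hn⟩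
    refine ⟨nn, ?_⟩
    have h2 : (2 * (Real.pi:ℂ) * Complex.I) ≠ 0 := by
      simp [Real.pi_ne_zero, Complex.I_ne_zero]
    have : (q : ℂ) = (nn : ℂ) := by
      apply mul_left_cancel₀ h2
      rw [show (2 * (Real.pi:ℂ) * Complex.I) * (q:ℂ) = 2 * Real.pi * Complex.I * (q:ℚ) by push_cast; ring] 
      rw [hn]; push_cast; ring
    exact_mod_cast this
  · rintro ⟨z, rfl⟩
    exact ⟨z, by push_cast; ring⟩

lemma EE_pow (x : ℕ) (q : ℚ) : EE q ^ x = EE (x * q) := by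
  rw [EE, EE, ← Complex.exp_nat_mul]
  push_cast
  ring_nf

lemma EE_sum {ι : Type*} (s : Finset ι) (f : ι → ℚ) : EE (∑ i ∈ s, f i) = ∏ i ∈ s, EE (f i) := by
  classical
  induction s using Finset.induction_on with
  | empty => simp [EE]
  | insert _ _ h ih => rw [Finset.sum_insert h, Finset.prod_insert h, EE_add, ih]

lemma fract_zero_iff (q : ℚ) : Int.fract q = 0 ↔ ∃ z : ℤ, q = z := by
  constructor
  · intro h
    exact ⟨⌊q⌋, by have := Int.fract_add_floor q; rw [h] at this; linarith⟩
  · rintro ⟨z, rfl⟩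
    exact Int.fract_intCast z


lemma geo_sum (N : ℕ) (q : ℚ) (hq : ∃ z : ℤ, (N : ℚ) * q = z) :
    ∑ x ∈ range N, EE q ^ x = if Int.fract q = 0 then (N : ℂ) else 0 := by
  by_cases h : Int.fract q = 0
  · obtain ⟨z, rfl⟩ := (fract_zero_iff q).mp h
    simp [EE_intCast, h]
  · rw [if_neg h]
    have hq1 : EE q ≠ 1 := fun he => h ((fract_zero_iff q).mpr ((EE_eq_one_iff q).mp he))
    rw [geom_sum_eq hq1]
    obtain ⟨z, hz⟩ := hq
    rw [EE_pow, hz, EE_intCast]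
    simp

lemma fract_sub_zero_iff (θ σ : ℚ) : Int.fract (θ - σ) = 0 ↔ Int.fract σ = Int.fract θ := by
  rw [fract_zero_iff, Int.fract_eq_fract]
  constructor
  · rintro ⟨z, hz⟩; exact ⟨-z, by push_cast; linarith⟩
  · rintro ⟨z, hz⟩; exact ⟨-z, by push_cast; linarith⟩

section general
variable {ι : Type*} [DecidableEq ι] (ν : ι → ℕ) (b : ι → ℤ) (N : ℕ)

lemma nsig (hdvd : ∀ s, ν s ∣ N) (hν : ∀ s, 0 < ν s) (I : Finset ι) :
    ∃ z : ℤ, (N : ℚ) * (∑ s ∈ I, (1:ℚ) / ν s) = z := by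
  refine ⟨((∑ s ∈ I, N / ν s : ℕ) : ℤ), ?_⟩
  have h1 : ∀ s ∈ I, (N:ℚ) * ((1:ℚ) / ν s) = ((N / ν s : ℕ) : ℚ) := by
    intro s _
    rw [Nat.cast_div (hdvd s) (by exact_mod_cast (hν s).ne')]
    ring
  rw [Finset.mul_sum, Finset.sum_congr rfl h1]
  push_cast
  rfl

lemma expand (hdvd : ∀ s, ν s ∣ N) (hν : ∀ s, 0 < ν s)
    (S : Finset ι) (y : ℤ) (θ : ℚ) (hθ : ∃ z : ℤ, (N : ℚ) * θ = z) :
    ∑ x ∈ range N, (∏ s ∈ S, (1 - EE ((b s - (y + x)) / ν s))) * EE θ ^ x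
      = N * ∑ I ∈ S.powerset.filter
          (fun I => Int.fract (∑ s ∈ I, (1:ℚ) / ν s) = Int.fract θ),
          (-1 : ℂ) ^ I.card * EE (∑ s ∈ I, ((b s : ℚ) - y) / ν s) := by
  classical
  have hprod : ∀ x : ℕ, (∏ s ∈ S, (1 - EE ((b s - (y + x)) / ν s)))
      = ∑ I ∈ S.powerset, ((-1:ℂ)^I.card * EE (∑ s ∈ I, ((b s : ℚ) - y) / ν s))
          * (EE (-(∑ s ∈ I, (1:ℚ) / ν s)))^x := by
    intro x
    have h1 : ∀ s ∈ S, (1 - EE ((b s - (y + x)) / ν s))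
        = (-EE ((b s - (y + x)) / ν s)) + 1 := fun s _ => by ring
    rw [Finset.prod_congr rfl h1, Finset.prod_add]
    refine Finset.sum_congr rfl fun I hI => ?_
    rw [Finset.prod_const_one, mul_one]
    have h2 : ∀ s ∈ I, (-EE ((b s - (y + x)) / ν s))
        = (-1 : ℂ) * EE (((b s : ℚ) - y) / ν s + (x:ℚ) * (-(1 / ν s))) := by
      intro s _
      rw [neg_one_mul]
      congr 1
      congr 1
      have hne : (ν s : ℚ) ≠ 0 := by exact_mod_cast (hν s).ne'
      field_simp
      ring
    rw [Finset.prod_congr rfl h2, Finset.prod_mul_distrib, Finset.prod_const, ← EE_sum]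
    have hsum : (∑ s ∈ I, (((b s : ℚ) - y) / ν s + (x:ℚ) * (-(1 / ν s))))
        = (∑ s ∈ I, ((b s : ℚ) - y) / ν s) + (x:ℚ) * (-(∑ s ∈ I, (1:ℚ) / ν s)) := by
      rw [Finset.sum_add_distrib]
      congr 1
      rw [← Finset.mul_sum, ← Finset.sum_neg_distrib]
    rw [hsum, EE_add, ← EE_pow]
    ring
  calc ∑ x ∈ range N, (∏ s ∈ S, (1 - EE ((b s - (y + x)) / ν s))) * EE θ ^ x
      = ∑ x ∈ range N, ∑ I ∈ S.powerset,
          ((-1:ℂ)^I.card * EE (∑ s ∈ I, ((b s : ℚ) - y) / ν s))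
            * (EE (θ - ∑ s ∈ I, (1:ℚ) / ν s))^x := by
        refine Finset.sum_congr rfl fun x _ => ?_
        rw [hprod x, Finset.sum_mul]
        refine Finset.sum_congr rfl fun I _ => ?_
        rw [mul_assoc, ← mul_pow, ← EE_add]
        congr 3
        ring
    _ = ∑ I ∈ S.powerset, ((-1:ℂ)^I.card * EE (∑ s ∈ I, ((b s : ℚ) - y) / ν s))
          * ∑ x ∈ range N, (EE (θ - ∑ s ∈ I, (1:ℚ) / ν s))^x := by
        rw [Finset.sum_comm]
        exact Finset.sum_congr rfl fun I _ => by rw [← Finset.mul_sum]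
    _ = ∑ I ∈ S.powerset, ((-1:ℂ)^I.card * EE (∑ s ∈ I, ((b s : ℚ) - y) / ν s))
          * (if Int.fract (∑ s ∈ I, (1:ℚ) / ν s) = Int.fract θ then (N:ℂ) else 0) := by
        refine Finset.sum_congr rfl fun I hI => ?_
        congr 1
        rw [geo_sum]
        · simp only [fract_sub_zero_iff]
        · obtain ⟨z₁, hz₁⟩ := hθ
          obtain ⟨z₂, hz₂⟩ := nsig ν N hdvd hν I
          exact ⟨z₁ - z₂, by push_cast; rw [mul_sub, hz₁, hz₂]⟩
    _ = N * ∑ I ∈ S.powerset.filter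
          (fun I => Int.fract (∑ s ∈ I, (1:ℚ) / ν s) = Int.fract θ),
          (-1 : ℂ) ^ I.card * EE (∑ s ∈ I, ((b s : ℚ) - y) / ν s) := by
        rw [Finset.sum_filter, Finset.mul_sum]
        refine Finset.sum_congr rfl fun I _ => ?_
        split_ifs <;> ring

end general


section general
variable {ι : Type*} [DecidableEq ι] (ν : ι → ℕ) (b : ι → ℤ) (N : ℕ)
lemma cover_classSum (hdvd : ∀ s, ν s ∣ N) (hν : ∀ s, 0 < ν s) (hN : 0 < N)
    (S : Finset ι) (hc : ∀ x : ℤ, ∃ s ∈ S, (ν s : ℤ) ∣ x - b s)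
    (θ : ℚ) (hθ : ∃ z : ℤ, (N : ℚ) * θ = z) :
    ∑ I ∈ S.powerset.filter
        (fun I => Int.fract (∑ s ∈ I, (1:ℚ) / ν s) = Int.fract θ),
        (-1 : ℂ) ^ I.card * EE (∑ s ∈ I, ((b s : ℚ) - 0) / ν s) = 0 := by
  have h := expand ν b N hdvd hν S 0 θ hθ
  have hz : ∑ x ∈ range N, (∏ s ∈ S, (1 - EE ((b s - ((0:ℤ) + x)) / ν s))) * EE θ ^ x = 0 := by
    refine Finset.sum_eq_zero fun x _ => ?_
    obtain ⟨s, hsS, hdv⟩ := hc (x : ℤ)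
    have : (1 - EE ((b s - ((0:ℤ) + x)) / ν s)) = 0 := by
      obtain ⟨c, hcc⟩ := hdv
      have harg : ((b s : ℚ) - ((0:ℤ) + x)) / ν s = ((-c : ℤ) : ℚ) := by
        have hne : (ν s : ℚ) ≠ 0 := by exact_mod_cast (hν s).ne'
        have : ((b s : ℚ) - ((0:ℤ) + x)) = (ν s : ℚ) * ((-c : ℤ) : ℚ) := by
          have : ((x : ℤ) : ℚ) - (b s : ℚ) = (ν s : ℚ) * (c : ℚ) := by exact_mod_cast hcc
          push_cast at this ⊢
          linarith
        rw [this, mul_comm, mul_div_assoc, div_self hne, mul_one]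
      rw [harg, EE_intCast, sub_self]
    rw [prod_eq_zero hsS this, zero_mul]
  rw [hz] at h
  have hN' : (N : ℂ) ≠ 0 := by exact_mod_cast hN.ne'
  rcases mul_eq_zero.mp h.symm with h' | h'
  · exact absurd h' hN'
  · exact h'

lemma dich (hdvd : ∀ s, ν s ∣ N) (hν : ∀ s, 0 < ν s) (hN : 0 < N) :
    ∀ (l : ℕ) (S : Finset ι)
      (_ : ∀ x : ℤ, l ≤ ((S.filter (fun s => (ν s : ℤ) ∣ x - b s)).card))
      (I₀ : Finset ι) (_ : I₀ ⊆ S),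
    2 ^ l ≤ ((S.powerset.filter
      (fun I => Int.fract (∑ s ∈ I, (1:ℚ) / ν s)
        = Int.fract (∑ s ∈ I₀, (1:ℚ) / ν s))).card) := by
  intro l
  induction l with
  | zero =>
    intro S hc I₀ hI₀
    rw [pow_zero, Nat.one_le_iff_ne_zero, ← Nat.pos_iff_ne_zero, Finset.card_pos]
    exact ⟨I₀, by simp [Finset.mem_filter, Finset.mem_powerset, hI₀]⟩
  | succ l ih =>
    intro S hc I₀ hI₀
    classical
    set cls := S.powerset.filter
      (fun I => Int.fract (∑ s ∈ I, (1:ℚ) / ν s)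
        = Int.fract (∑ s ∈ I₀, (1:ℚ) / ν s)) with hcls
    have hI₀cls : I₀ ∈ cls := by
      simp [hcls, Finset.mem_filter, Finset.mem_powerset, hI₀]
    by_cases huniq : ∀ I ∈ cls, I = I₀
    · exfalso
      have hcover : ∀ x : ℤ, ∃ s ∈ S, (ν s : ℤ) ∣ x - b s := by
        intro x
        have h1 := hc x
        have h2 : (S.filter (fun s => (ν s : ℤ) ∣ x - b s)).Nonempty := by
          rw [← Finset.card_pos]; omega
        obtain ⟨s, hs⟩ := h2
        exact ⟨s, (Finset.mem_filter.mp hs).1, (Finset.mem_filter.mp hs).2⟩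
      have hA := cover_classSum ν b N hdvd hν hN S hcover
        (∑ s ∈ I₀, (1:ℚ) / ν s) (nsig ν N hdvd hν I₀)
      have hsingle : cls = {I₀} :=
        Finset.eq_singleton_iff_unique_mem.mpr ⟨hI₀cls, huniq⟩
      rw [← hcls, hsingle, Finset.sum_singleton] at hA
      exact mul_ne_zero (pow_ne_zero _ (by norm_num)) (EE_ne_zero _) hA
    · push_neg at huniq
      obtain ⟨I₁, hI₁cls, hI₁ne⟩ := huniq
      have hex : ∃ j, (j ∈ I₁ ∧ j ∉ I₀) ∨ (j ∈ I₀ ∧ j ∉ I₁) := by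
        by_contra hno
        push_neg at hno
        exact hI₁ne (Finset.ext fun a => ⟨fun h => (hno a).1 h, fun h => (hno a).2 h⟩)
      obtain ⟨j, hj⟩ := hex
      have key : ∀ A₁ A₂, A₁ ∈ cls → A₂ ∈ cls → j ∈ A₁ → j ∉ A₂ →
          2 ^ (l + 1) ≤ cls.card := by
        intro A₁ A₂ h1 h2 hj1 hj2
        have hA₁S : A₁ ⊆ S := Finset.mem_powerset.mp (Finset.mem_filter.mp h1).1
        have hA₂S : A₂ ⊆ S := Finset.mem_powerset.mp (Finset.mem_filter.mp h2).1
        have hfr1 : Int.fract (∑ s ∈ A₁, (1:ℚ) / ν s)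
            = Int.fract (∑ s ∈ I₀, (1:ℚ) / ν s) := (Finset.mem_filter.mp h1).2
        have hfr2 : Int.fract (∑ s ∈ A₂, (1:ℚ) / ν s)
            = Int.fract (∑ s ∈ I₀, (1:ℚ) / ν s) := (Finset.mem_filter.mp h2).2
        have hjS : j ∈ S := hA₁S hj1
        set S' := S.erase j with hS'
        have hc' : ∀ x : ℤ, l ≤ ((S'.filter (fun s => (ν s : ℤ) ∣ x - b s)).card) := by
          intro x
          have h3 := hc x
          rw [hS', Finset.filter_erase]
          have h4 := Finset.card_erase_le (a := j) (s := (S.filter (fun s => (ν s : ℤ) ∣ x - b s)))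
          have h5 := Finset.pred_card_le_card_erase (a := j)
            (s := (S.filter (fun s => (ν s : ℤ) ∣ x - b s)))
          omega
        -- family 1 : subsets avoiding j
        have ih1 := ih S' hc' A₂ (Finset.subset_erase.mpr ⟨hA₂S, hj2⟩)
        have hsub1 : (S'.powerset.filter
            (fun I => Int.fract (∑ s ∈ I, (1:ℚ) / ν s)
              = Int.fract (∑ s ∈ A₂, (1:ℚ) / ν s)))
            ⊆ cls.filter (fun I => j ∉ I) := by
          intro I hI
          have hIS' : I ⊆ S' := Finset.mem_powerset.mp (Finset.mem_filter.mp hI).1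
          have hfr : Int.fract (∑ s ∈ I, (1:ℚ) / ν s)
              = Int.fract (∑ s ∈ A₂, (1:ℚ) / ν s) := (Finset.mem_filter.mp hI).2
          rw [Finset.subset_erase] at hIS'
          refine Finset.mem_filter.mpr ⟨Finset.mem_filter.mpr
            ⟨Finset.mem_powerset.mpr hIS'.1, ?_⟩, hIS'.2⟩
          rw [hfr, hfr2]
        -- family 2 : subsets containing j
        have hA₁e : A₁.erase j ⊆ S' := Finset.erase_subset_erase _ hA₁S
        have ih2 := ih S' hc' (A₁.erase j) hA₁e
        have himg : (S'.powerset.filter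
            (fun I => Int.fract (∑ s ∈ I, (1:ℚ) / ν s)
              = Int.fract (∑ s ∈ A₁.erase j, (1:ℚ) / ν s))).image (insert j)
            ⊆ cls.filter (fun I => j ∈ I) := by
          intro I' hI'
          obtain ⟨I, hI, rfl⟩ := Finset.mem_image.mp hI'
          have hIS' : I ⊆ S' := Finset.mem_powerset.mp (Finset.mem_filter.mp hI).1
          have hfr : Int.fract (∑ s ∈ I, (1:ℚ) / ν s)
              = Int.fract (∑ s ∈ A₁.erase j, (1:ℚ) / ν s) := (Finset.mem_filter.mp hI).2
          rw [Finset.subset_erase] at hIS'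
          have hjI : j ∉ I := hIS'.2
          refine Finset.mem_filter.mpr ⟨Finset.mem_filter.mpr
            ⟨Finset.mem_powerset.mpr ?_, ?_⟩, Finset.mem_insert_self _ _⟩
          · intro a ha
            rcases Finset.mem_insert.mp ha with rfl | ha'
            · exact hjS
            · exact hIS'.1 ha'
          · rw [Finset.sum_insert hjI]
            have hstep : Int.fract ((1:ℚ)/ν j + ∑ s ∈ I, (1:ℚ) / ν s)
                = Int.fract ((1:ℚ)/ν j + ∑ s ∈ A₁.erase j, (1:ℚ) / ν s) := by
              rw [Int.fract_eq_fract] at hfr ⊢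
              obtain ⟨z, hz⟩ := hfr
              exact ⟨z, by linarith⟩
            rw [hstep]
            have : (1:ℚ)/ν j + ∑ s ∈ A₁.erase j, (1:ℚ) / ν s
                = ∑ s ∈ A₁, (1:ℚ) / ν s := by
              rw [add_comm]
              exact Finset.sum_erase_add _ _ hj1
            rw [this, hfr1]
        have hinj : Set.InjOn (insert j) ((S'.powerset.filter
            (fun I => Int.fract (∑ s ∈ I, (1:ℚ) / ν s)
              = Int.fract (∑ s ∈ A₁.erase j, (1:ℚ) / ν s))) : Set (Finset ι)) := by
          intro x hx y hy hxy
          have hxS' : x ⊆ S' := Finset.mem_powerset.mp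
            (Finset.mem_filter.mp (Finset.mem_coe.mp hx)).1
          have hyS' : y ⊆ S' := Finset.mem_powerset.mp
            (Finset.mem_filter.mp (Finset.mem_coe.mp hy)).1
          have hjx : j ∉ x := (Finset.subset_erase.mp hxS').2
          have hjy : j ∉ y := (Finset.subset_erase.mp hyS').2
          rw [← Finset.erase_insert hjx, ← Finset.erase_insert hjy, hxy]
        have hcount := Finset.card_filter_add_card_filter_not
          (s := cls) (p := fun I => j ∈ I)
        have hb1 : 2 ^ l ≤ (cls.filter (fun I => j ∉ I)).card := by
          calc 2 ^ l ≤ _ := ih1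
          _ ≤ (cls.filter (fun I => j ∉ I)).card := Finset.card_le_card hsub1
        have hb2 : 2 ^ l ≤ (cls.filter (fun I => j ∈ I)).card := by
          have := Finset.card_image_of_injOn hinj
          calc 2 ^ l ≤ _ := ih2
          _ = _ := this.symm
          _ ≤ (cls.filter (fun I => j ∈ I)).card := Finset.card_le_card himg
        have hpow : 2 ^ (l + 1) = 2 ^ l + 2 ^ l := by ring
        omega
      rcases hj with ⟨hj1, hj2⟩ | ⟨hj1, hj2⟩
      · exact key I₁ I₀ hI₁cls hI₀cls hj1 hj2
      · exact key I₀ I₁ hI₀cls hI₁cls hj1 hj2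

end general


lemma fract_div_eq_zero_iff (z : ℤ) (nn : ℕ) (h : 0 < nn) :
    Int.fract ((z : ℚ) / nn) = 0 ↔ (nn : ℤ) ∣ z := by
  rw [Int.fract_div_intCast_eq_div_intCast_mod]
  have hne : ((nn : ℤ) : ℚ) ≠ 0 := by exact_mod_cast (Int.natCast_pos.mpr h).ne'
  rw [div_eq_zero_iff]
  constructor
  · rintro (h1 | h1)
    · have : z % (nn : ℤ) = 0 := by exact_mod_cast h1
      exact Int.dvd_of_emod_eq_zero this
    · exact absurd h1 (by exact_mod_cast hne)
  · intro h1
    left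
    have : z % (nn : ℤ) = 0 := Int.emod_eq_zero_of_dvd h1
    exact_mod_cast this

-- the step lemma for the fract-sum telescoping
lemma fract_step (z : ℤ) (nn : ℕ) (h : 0 < nn) :
    Int.fract (((z : ℚ) - 1) / nn)
      = Int.fract ((z : ℚ) / nn) - 1 / nn + (if (nn : ℤ) ∣ z then 1 else 0) := by
  have hz1 : ((z : ℚ) - 1) = ((z - 1 : ℤ) : ℚ) := by push_cast; ring
  have hne : (nn : ℚ) ≠ 0 := by exact_mod_cast h.ne'
  have hnz : (nn : ℤ) ≠ 0 := by exact_mod_cast h.ne'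
  rw [hz1, Int.fract_div_intCast_eq_div_intCast_mod, Int.fract_div_intCast_eq_div_intCast_mod]
  by_cases hd : (nn : ℤ) ∣ z
  · rw [if_pos hd]
    have h0 : z % (nn : ℤ) = 0 := Int.emod_eq_zero_of_dvd hd
    have h1 : (z - 1) % (nn : ℤ) = (nn : ℤ) - 1 := by
      have heq : ((z - 1) - ((nn : ℤ) - 1)) % (nn : ℤ) = 0 := by
        have : (z - 1) - ((nn : ℤ) - 1) = z - nn := by ring
        rw [this]
        apply Int.emod_eq_zero_of_dvd
        exact dvd_sub hd (dvd_refl _)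
      have h2 : ((nn : ℤ) - 1) % (nn : ℤ) = (nn : ℤ) - 1 := by
        apply Int.emod_eq_of_lt <;> omega
      rw [Int.emod_eq_emod_iff_emod_sub_eq_zero.mpr heq, h2]
    rw [h0, h1]
    push_cast
    field_simp
    ring
  · rw [if_neg hd]
    have h0 : z % (nn : ℤ) ≠ 0 := fun hc => hd (Int.dvd_of_emod_eq_zero hc)
    have hlow : 0 ≤ z % (nn : ℤ) := Int.emod_nonneg z hnz
    have hhigh : z % (nn : ℤ) < nn := Int.emod_lt_of_pos z (by exact_mod_cast h)
    have h1 : (z - 1) % (nn : ℤ) = z % (nn : ℤ) - 1 := by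
      have heq : ((z - 1) - (z % (nn : ℤ) - 1)) % (nn : ℤ) = 0 := by
        have h3 : (z - 1) - (z % (nn : ℤ) - 1) = z - z % (nn : ℤ) := by ring
        rw [h3]
        apply Int.emod_eq_zero_of_dvd
        exact Int.dvd_self_sub_of_emod_eq rfl
      have h2 : (z % (nn : ℤ) - 1) % (nn : ℤ) = z % (nn : ℤ) - 1 := by
        apply Int.emod_eq_of_lt <;> omega
      rw [Int.emod_eq_emod_iff_emod_sub_eq_zero.mpr heq, h2]
    rw [h1]
    push_cast
    field_simp
    ring

-- phase-positivity form of 1 - EE q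
lemma one_sub_EE (q : ℚ) :
    1 - EE q = (-2 * Complex.I)
        * Complex.exp ((Real.pi : ℂ) * Complex.I * ((Int.fract q : ℚ) : ℂ))
        * ((Real.sin (Real.pi * ((Int.fract q : ℚ) : ℝ)) : ℝ) : ℂ) := by
  have hfr : EE q = EE (Int.fract q) := by
    conv_lhs => rw [show q = Int.fract q + (⌊q⌋ : ℚ) by rw [Int.fract]; ring]
    rw [EE_add, EE_intCast, mul_one]
  rw [hfr, EE]
  set x : ℝ := ((Int.fract q : ℚ) : ℝ) with hx
  have hcast : ((Int.fract q : ℚ) : ℂ) = (x : ℂ) := by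
    rw [hx]; norm_cast
  rw [hcast]
  have hsin : ((Real.sin (Real.pi * x) : ℝ) : ℂ)
      = (Complex.exp (-((Real.pi : ℂ) * x * Complex.I))
          - Complex.exp ((Real.pi : ℂ) * x * Complex.I)) * Complex.I / 2 := by
    rw [Complex.ofReal_sin]
    push_cast
    rw [Complex.sin]
    ring_nf
  rw [hsin]
  have he1 : Complex.exp ((Real.pi : ℂ) * Complex.I * x)
      * Complex.exp (-((Real.pi : ℂ) * x * Complex.I)) = 1 := by
    rw [← Complex.exp_add]
    rw [show ((Real.pi : ℂ) * Complex.I * x + -((Real.pi : ℂ) * x * Complex.I)) = 0 by ring]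
    exact Complex.exp_zero
  have he2 : Complex.exp ((Real.pi : ℂ) * Complex.I * x)
      * Complex.exp ((Real.pi : ℂ) * x * Complex.I)
      = Complex.exp (2 * (Real.pi : ℂ) * Complex.I * x) := by
    rw [← Complex.exp_add]
    congr 1
    ring
  have hI2 : Complex.I * Complex.I = -1 := Complex.I_mul_I
  calc (1 : ℂ) - Complex.exp (2 * Real.pi * Complex.I * ((Int.fract q : ℚ) : ℂ))
      = 1 - Complex.exp (2 * (Real.pi : ℂ) * Complex.I * x) := by rw [hcast]
    _ = (-2 * Complex.I) * Complex.exp ((Real.pi : ℂ) * Complex.I * x)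
        * ((Complex.exp (-((Real.pi : ℂ) * x * Complex.I))
          - Complex.exp ((Real.pi : ℂ) * x * Complex.I)) * Complex.I / 2) := by
        rw [show (-2 * Complex.I) * Complex.exp ((Real.pi : ℂ) * Complex.I * x)
            * ((Complex.exp (-((Real.pi : ℂ) * x * Complex.I))
              - Complex.exp ((Real.pi : ℂ) * x * Complex.I)) * Complex.I / 2)
          = (-2) * (Complex.I * Complex.I)
            * ((Complex.exp ((Real.pi : ℂ) * Complex.I * x)
                * Complex.exp (-((Real.pi : ℂ) * x * Complex.I)))
              - (Complex.exp ((Real.pi : ℂ) * Complex.I * x)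
                * Complex.exp ((Real.pi : ℂ) * x * Complex.I))) / 2 from by ring]
        rw [hI2, he1, he2]
        ring


section general
variable {ι : Type*} [DecidableEq ι] (ν : ι → ℕ) (b : ι → ℤ) (N : ℕ)
end general

set_option maxHeartbeats 2000000

/-- Suppose `{a s + n s ℤ}_{s ∈ Fin (k+1)}` is an `m`-cover of `ℤ`, but dropping the last
progression it is no longer an `m`-cover, and the covering function is periodic mod the
last modulus. Then for each `0 ≤ r < n (last)`, at least `2^(m-1)` subsets `I` of the
first `k` indices have `Int.fract (∑_{s∈I} 1/(n s)) = r / n (last)`. -/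
theorem stmt10 (k m : ℕ) (hm : 1 ≤ m) (a : Fin (k + 1) → ℤ) (n : Fin (k + 1) → ℕ)
    (hn : ∀ s, 0 < n s)
    (hcov : ∀ x : ℤ, m ≤ (univ.filter fun s => (n s : ℤ) ∣ x - a s).card)
    (hnot : ¬ ∀ x : ℤ,
      m ≤ ((univ.erase (Fin.last k)).filter fun s => (n s : ℤ) ∣ x - a s).card)
    (hper : ∀ x : ℤ,
      (univ.filter fun s => (n s : ℤ) ∣ (x + (n (Fin.last k) : ℤ)) - a s).card =
        (univ.filter fun s => (n s : ℤ) ∣ x - a s).card)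
    (r : ℕ) (hr : r < n (Fin.last k)) :
    2 ^ (m - 1) ≤ (((univ.erase (Fin.last k)).powerset).filter fun I =>
      Int.fract (∑ s ∈ I, (1 : ℚ) / (n s : ℚ)) =
        (r : ℚ) / (n (Fin.last k) : ℚ)).card := by
  classical
  push_neg at hnot
  obtain ⟨x₁, hx₁⟩ := hnot
  set lst := Fin.last k with hlst
  -- abbreviations
  set cov' : ℤ → Finset (Fin (k+1)) :=
    fun y => (univ.erase lst).filter (fun s => (n s : ℤ) ∣ y - a s) with hcov'
  have hsplit : ∀ x : ℤ, (univ.filter fun s => (n s : ℤ) ∣ x - a s).card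
      = (cov' x).card + (if (n lst : ℤ) ∣ x - a lst then 1 else 0) := by
    intro x
    simp only [hcov']
    rw [Finset.filter_erase]
    by_cases h : (n lst : ℤ) ∣ x - a lst
    · rw [if_pos h]
      have hmem : lst ∈ univ.filter (fun s => (n s : ℤ) ∣ x - a s) :=
        Finset.mem_filter.mpr ⟨Finset.mem_univ _, h⟩
      rw [Finset.card_erase_of_mem hmem]
      have hp : 0 < (univ.filter (fun s => (n s : ℤ) ∣ x - a s)).card :=
        Finset.card_pos.mpr ⟨lst, hmem⟩
      omega
    · rw [if_neg h]
      have hnm : lst ∉ univ.filter (fun s => (n s : ℤ) ∣ x - a s) :=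
        fun hmem => h (Finset.mem_filter.mp hmem).2
      rw [Finset.erase_eq_of_notMem hnm]
      omega
  -- basic facts at x₁
  have hx₁' : (cov' x₁).card < m := hx₁
  have hd₁ : (n lst : ℤ) ∣ x₁ - a lst ∧ (cov' x₁).card = m - 1 := by
    have h1 := hcov x₁
    rw [hsplit x₁] at h1
    by_cases h : (n lst : ℤ) ∣ x₁ - a lst
    · rw [if_pos h] at h1; exact ⟨h, by omega⟩
    · rw [if_neg h] at h1; omega
  -- periodicity of cov'-count
  have hper' : ∀ x : ℤ, (cov' (x + (n lst : ℤ))).card = (cov' x).card := by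
    intro x
    have ha := hper x
    rw [hsplit (x + (n lst : ℤ)), hsplit x] at ha
    have hiff : ((n lst : ℤ) ∣ (x + (n lst : ℤ)) - a lst) ↔ ((n lst : ℤ) ∣ x - a lst) := by
      rw [show (x + (n lst : ℤ)) - a lst = (x - a lst) + (n lst : ℤ) by ring]
      constructor
      · intro hh
        have := dvd_sub hh (dvd_refl (n lst : ℤ)); simpa using this
      · intro hh; exact dvd_add hh (dvd_refl _)
    by_cases h : (n lst : ℤ) ∣ x - a lst
    · rw [if_pos h, if_pos (hiff.mpr h)] at ha; omega
    · rw [if_neg h, if_neg (fun hc => h (hiff.mp hc))] at ha; omega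
  have hperN : ∀ (x : ℤ) (u : ℕ), (cov' (x + (n lst : ℤ) * u)).card = (cov' x).card := by
    intro x u
    induction u with
    | zero => simp
    | succ u ih =>
      have he : x + (n lst : ℤ) * ((u:ℕ)+1 : ℕ) = (x + (n lst : ℤ) * u) + (n lst : ℤ) := by
        push_cast; ring
      rw [he, hper', ih]
  have hcong : ∀ x y : ℤ, (n lst : ℤ) ∣ x - y → (cov' x).card = (cov' y).card := by
    intro x y ⟨d, hd⟩
    rcases le_or_gt 0 d with hpos | hneg
    · lift d to ℕ using hpos with u
      have hxy : x = y + (n lst : ℤ) * u := by linarith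
      rw [hxy, hperN]
    · have hpos2 : (0:ℤ) ≤ -d := by omega
      have hxy : y = x + (n lst : ℤ) * ((-d).toNat) := by
        rw [Int.toNat_of_nonneg hpos2]; linarith
      rw [hxy, hperN]
  -- the exceptional index set S and the complement C
  set S : Finset (Fin (k+1)) := cov' x₁ with hS
  have hSsub : S ⊆ univ.erase lst := Finset.filter_subset _ _
  have hScard : S.card = m - 1 := hd₁.2
  set C : Finset (Fin (k+1)) := (univ.erase lst) \ S with hC
  -- moduli
  set nst : ℕ := Nat.lcm (n lst) (S.lcm n) with hnst
  have hn₀nst : n lst ∣ nst := Nat.dvd_lcm_left _ _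
  have hjnst : ∀ j ∈ S, n j ∣ nst := fun j hj =>
    dvd_trans (Finset.dvd_lcm hj) (Nat.dvd_lcm_right _ _)
  have hSlcm : 0 < S.lcm n := by
    rcases Nat.eq_zero_or_pos (S.lcm n) with h | h
    · exfalso
      rw [Finset.lcm_eq_zero_iff] at h
      obtain ⟨j, hj, hj0⟩ := h
      exact (hn j).ne' hj0
    · exact h
  have hnst0 : 0 < nst := Nat.lcm_pos (hn lst) hSlcm
  set N : ℕ := ∏ s ∈ univ, n s with hN
  have hNpos : 0 < N := Finset.prod_pos (fun s _ => hn s)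
  have hdvdN : ∀ s, n s ∣ N := fun s => Finset.dvd_prod_of_mem _ (Finset.mem_univ s)
  have hnstN : nst ∣ N :=
    Nat.lcm_dvd (hdvdN lst) (Finset.lcm_dvd fun j _ => hdvdN j)
  set D : ℕ := N / nst with hD
  have hND : N = nst * D := (Nat.mul_div_cancel' hnstN).symm
  have hD0 : 0 < D := by
    rcases Nat.eq_zero_or_pos D with h | h
    · rw [h, Nat.mul_zero] at hND; omega
    · exact h
  -- every point of x₁ + nst ℤ is covered exactly by S (among non-last indices)
  have hcovS : ∀ y : ℤ, (nst : ℤ) ∣ y - x₁ → cov' y = S := by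
    intro y hy
    have hsub : S ⊆ cov' y := by
      intro j hj
      have hj' := Finset.mem_filter.mp hj
      refine Finset.mem_filter.mpr ⟨hj'.1, ?_⟩
      have h1 : (n j : ℤ) ∣ y - x₁ :=
        dvd_trans (Int.natCast_dvd_natCast.mpr (hjnst j hj)) hy
      rw [show y - a j = (y - x₁) + (x₁ - a j) by ring]
      exact dvd_add h1 hj'.2
    have hcard : (cov' y).card ≤ S.card := by
      have h2 : (cov' y).card = (cov' x₁).card :=
        hcong y x₁ (dvd_trans (Int.natCast_dvd_natCast.mpr hn₀nst) hy)
      rw [← hS] at h2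
      omega
    exact (Finset.eq_of_subset_of_card_le hsub hcard).symm
  -- if no element of C covers y then y ∈ x₁ + nst ℤ
  have hmiss : ∀ y : ℤ, (∀ s ∈ C, ¬ (n s : ℤ) ∣ y - a s) → (nst : ℤ) ∣ y - x₁ := by
    intro y hymiss
    have hsub : cov' y ⊆ S := by
      intro s hs
      have hs' := Finset.mem_filter.mp hs
      by_contra hsS
      exact hymiss s (Finset.mem_sdiff.mpr ⟨hs'.1, hsS⟩) hs'.2
    by_cases hdl : (n lst : ℤ) ∣ y - a lst
    · have h1 : (n lst : ℤ) ∣ y - x₁ := by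
        rw [show y - x₁ = (y - a lst) - (x₁ - a lst) by ring]
        exact dvd_sub hdl hd₁.1
      have h2 : (cov' y).card = m - 1 := by
        have := hcong y x₁ h1
        rw [← hS] at this
        omega
      have h3 : cov' y = S :=
        Finset.eq_of_subset_of_card_le hsub (by omega)
      have h4 : ∀ j ∈ S, (n j : ℤ) ∣ y - x₁ := by
        intro j hj
        have hjy : (n j : ℤ) ∣ y - a j := by
          have hmem : j ∈ cov' y := by rw [h3]; exact hj
          exact (Finset.mem_filter.mp hmem).2
        have hjx : (n j : ℤ) ∣ x₁ - a j := (Finset.mem_filter.mp hj).2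
        rw [show y - x₁ = (y - a j) - (x₁ - a j) by ring]
        exact dvd_sub hjy hjx
      have h5 : nst ∣ (y - x₁).natAbs := by
        apply Nat.lcm_dvd
        · exact Int.natCast_dvd_natCast.mp (Int.dvd_natAbs.mpr h1)
        · exact Finset.lcm_dvd fun j hj =>
            Int.natCast_dvd_natCast.mp (Int.dvd_natAbs.mpr (h4 j hj))
      exact Int.dvd_natAbs.mp (Int.natCast_dvd_natCast.mpr h5)
    · exfalso
      have h1 := hcov y
      rw [hsplit y, if_neg hdl] at h1
      have h2 : (cov' y).card ≤ S.card := Finset.card_le_card hsub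
      omega
  -- the fract-sum function F and counting function w
  set w : ℤ → ℕ := fun y => ((C.filter fun s => (n s : ℤ) ∣ y - a s)).card with hw
  set F : ℤ → ℚ := fun y => ∑ s ∈ C, Int.fract (((a s : ℚ) - y) / (n s : ℚ)) with hF
  set σC : ℚ := ∑ s ∈ C, (1:ℚ) / (n s : ℚ) with hσC
  have hstep : ∀ y : ℤ, F (y + 1) = F y - σC + (w y : ℚ) := by
    intro y
    simp only [hF, hw, hσC]
    have hterm : ∀ s ∈ C, Int.fract (((a s : ℚ) - (y + 1 : ℤ)) / (n s : ℚ))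
        = Int.fract (((a s : ℚ) - y) / (n s : ℚ)) - 1 / (n s : ℚ)
          + (if (n s : ℤ) ∣ y - a s then (1:ℚ) else 0) := by
      intro s _
      have h1 : ((a s : ℚ) - ((y + 1 : ℤ) : ℚ)) = (((a s - y : ℤ) : ℚ) - 1) := by
        push_cast; ring
      have h2 : ((a s : ℚ) - (y : ℚ)) = ((a s - y : ℤ) : ℚ) := by push_cast; ring
      rw [h1, h2, fract_step (a s - y) (n s) (hn s)]
      congr 1
      have hiff : ((n s : ℤ) ∣ a s - y) ↔ ((n s : ℤ) ∣ y - a s) := dvd_sub_comm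
      by_cases hd : (n s : ℤ) ∣ y - a s
      · rw [if_pos hd, if_pos (hiff.mpr hd)]
      · rw [if_neg hd, if_neg (fun hc => hd (hiff.mp hc))]
    rw [Finset.sum_congr rfl hterm, Finset.sum_add_distrib, Finset.sum_sub_distrib,
      Finset.sum_boole]
  have hiter : ∀ (y : ℤ) (M : ℕ),
      F (y + M) = F y - M * σC + ∑ u ∈ range M, (w (y + u) : ℚ) := by
    intro y M
    induction M with
    | zero => simp
    | succ M ih =>
      have he : y + ((M + 1 : ℕ) : ℤ) = (y + M) + 1 := by push_cast; ring
      rw [he, hstep, ih, Finset.sum_range_succ]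
      push_cast
      ring
  have hcyc : ∀ y : ℤ, F (y + (N : ℤ)) = F y := by
    intro y
    simp only [hF]
    refine Finset.sum_congr rfl fun s _ => ?_
    have hne : (n s : ℚ) ≠ 0 := by exact_mod_cast (hn s).ne'
    have harg : ((a s : ℚ) - ((y + (N:ℤ)) : ℤ)) / (n s : ℚ)
        = ((a s : ℚ) - y) / (n s : ℚ) - (((N / n s : ℕ) : ℤ) : ℚ) := by
      rw [show (((N / n s : ℕ) : ℤ) : ℚ) = ((N / n s : ℕ) : ℚ) by push_cast; rfl]
      rw [Nat.cast_div (hdvdN s) hne]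
      push_cast
      field_simp
      ring
    rw [harg, Int.fract_sub_intCast]
  have hsumcyc : ∀ y : ℤ, ∑ u ∈ range N, (w (y + u) : ℚ) = N * σC := by
    intro y
    have h1 := hiter y N
    have h2 := hcyc y
    rw [h2] at h1
    linarith
  -- periodicity of w modulo nst
  have hwper : ∀ y : ℤ, w (y + (nst : ℤ)) = w y := by
    intro y
    have hCS : C ∪ S = univ.erase lst := Finset.sdiff_union_of_subset hSsub
    have hsplitw : ∀ z : ℤ, (cov' z).card
        = w z + (S.filter (fun s => (n s : ℤ) ∣ z - a s)).card := by
      intro z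
      simp only [hcov', hw]
      rw [← hCS, Finset.filter_union,
        Finset.card_union_of_disjoint
          (Finset.disjoint_filter_filter Finset.sdiff_disjoint)]
    have hwS : (S.filter (fun s => (n s : ℤ) ∣ (y + (nst : ℤ)) - a s)).card
        = (S.filter (fun s => (n s : ℤ) ∣ y - a s)).card := by
      congr 1
      apply Finset.filter_congr
      intro j hj
      have h1 : (n j : ℤ) ∣ (nst : ℤ) := Int.natCast_dvd_natCast.mpr (hjnst j hj)
      rw [show (y + (nst : ℤ)) - a j = (y - a j) + (nst : ℤ) by ring]
      constructor
      · intro hh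
        have := dvd_sub hh h1
        simpa using this
      · intro hh; exact dvd_add hh h1
    have hcnt : (cov' (y + (nst : ℤ))).card = (cov' y).card := by
      have he : (nst : ℤ) = (n lst : ℤ) * ((nst / n lst : ℕ) : ℤ) := by
        exact_mod_cast (Nat.mul_div_cancel' hn₀nst).symm
      rw [he]
      exact hperN y (nst / n lst)
    have e1 := hsplitw (y + (nst : ℤ))
    have e2 := hsplitw y
    omega
  -- block sums of w are constant
  have hBSstep : ∀ y : ℤ, (∑ u ∈ range nst, (w (y + 1 + u) : ℚ))
      = ∑ u ∈ range nst, (w (y + u) : ℚ) := by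
    intro y
    have h2 := Finset.sum_range_succ (fun u => (w (y + u) : ℚ)) nst
    have h3 := Finset.sum_range_succ' (fun u => (w (y + u) : ℚ)) nst
    have h4 : ∀ u : ℕ, w (y + ((u + 1 : ℕ) : ℤ)) = w (y + 1 + u) := by
      intro u; congr 1; push_cast; ring
    have h5 : (w (y + (nst : ℤ)) : ℚ) = (w y : ℚ) := by exact_mod_cast hwper y
    simp only [h4] at h3
    have h6 : (w (y + (0:ℕ)) : ℚ) = (w y : ℚ) := by norm_num
    rw [h6] at h3
    rw [h5] at h2
    linarith
  have hBSconst : ∀ j : ℕ, (∑ u ∈ range nst, (w (x₁ + j + u) : ℚ))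
      = ∑ u ∈ range nst, (w (x₁ + u) : ℚ) := by
    intro j
    induction j with
    | zero => norm_num
    | succ j ih =>
      have he : x₁ + ((j + 1 : ℕ) : ℤ) = (x₁ + j) + 1 := by push_cast; ring
      rw [he, hBSstep, ih]
  have haux : ∀ (g : ℕ → ℚ) (A B : ℕ),
      ∑ u ∈ range (A + B), g u = ∑ u ∈ range A, g u + ∑ v ∈ range B, g (A + v) := by
    intro g A B
    induction B with
    | zero => simp
    | succ B ih =>
      rw [show A + (B + 1) = (A + B) + 1 from rfl, Finset.sum_range_succ, ih,
        Finset.sum_range_succ]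
      ring
  have hblocks : ∀ Dv : ℕ, ∑ u ∈ range (nst * Dv), (w (x₁ + u) : ℚ)
      = Dv * ∑ u ∈ range nst, (w (x₁ + u) : ℚ) := by
    intro Dv
    induction Dv with
    | zero => simp
    | succ Dv ih =>
      rw [show nst * (Dv + 1) = nst * Dv + nst by ring, haux, ih]
      have h1 : ∀ v ∈ range nst, (w (x₁ + ((nst * Dv + v : ℕ) : ℤ)) : ℚ)
          = (w (x₁ + ((nst * Dv : ℕ) : ℤ) + v) : ℚ) := by
        intro v _; congr 2; push_cast; ring
      rw [Finset.sum_congr rfl h1, hBSconst (nst * Dv)]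
      push_cast
      ring
  have hBSval : ∑ u ∈ range nst, (w (x₁ + u) : ℚ) = nst * σC := by
    have h1 := hsumcyc x₁
    rw [hND] at h1
    rw [hblocks D] at h1
    have hD0' : ((D : ℚ)) ≠ 0 := by exact_mod_cast hD0.ne'
    have h2 : (D : ℚ) * (∑ u ∈ range nst, (w (x₁ + u) : ℚ))
        = (D : ℚ) * ((nst : ℚ) * σC) := by
      push_cast at h1 ⊢
      linarith
    exact mul_left_cancel₀ hD0' h2
  have hFconst : ∀ t : ℕ, F (x₁ + ((nst * t : ℕ) : ℤ)) = F x₁ := by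
    intro t
    induction t with
    | zero => norm_num
    | succ t ih =>
      have he : x₁ + ((nst * (t + 1) : ℕ) : ℤ) = (x₁ + ((nst * t : ℕ) : ℤ)) + (nst : ℕ) := by
        push_cast; ring
      rw [he, hiter _ nst]
      have h1 : ∑ u ∈ range nst, (w ((x₁ + ((nst * t : ℕ) : ℤ)) + u) : ℚ)
          = ∑ u ∈ range nst, (w (x₁ + (nst * t : ℕ) + u) : ℚ) := rfl
      rw [h1]
      have h2 : (∑ u ∈ range nst, (w (x₁ + (nst * t : ℕ) + u) : ℚ)) = nst * σC := by
        have h3 : ∀ u ∈ range nst, (w (x₁ + ((nst * t : ℕ) : ℤ) + u) : ℚ)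
            = (w (x₁ + ((nst * t : ℕ) : ℤ) + u) : ℚ) := fun _ _ => rfl
        rw [show (x₁ + ((nst * t : ℕ) : ℤ)) = x₁ + ((nst * t : ℕ) : ℤ) from rfl]
        rw [hBSconst (nst * t), hBSval]
      rw [h2, ih]
      ring
  -- ===== analytic part =====
  set θ : ℚ := (r : ℚ) / (n lst : ℚ) with hθdef
  have hn0Q : ((n lst : ℚ)) ≠ 0 := by exact_mod_cast (hn lst).ne'
  have hθ : ∃ z : ℤ, (N : ℚ) * θ = z := by
    refine ⟨((N / n lst * r : ℕ) : ℤ), ?_⟩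
    have h1 : ((N / n lst : ℕ) : ℚ) = (N : ℚ) / (n lst : ℚ) :=
      Nat.cast_div (hdvdN lst) hn0Q
    rw [hθdef, Int.cast_natCast, Nat.cast_mul, h1]
    field_simp
  have hexp := expand n a N hdvdN hn C x₁ θ hθ
  have hCmiss : ∀ t : ℕ, ∀ s ∈ C, ¬ (n s : ℤ) ∣ (x₁ + ((nst * t : ℕ) : ℤ)) - a s := by
    intro t s hsC hdvd
    have h1 : cov' (x₁ + ((nst * t : ℕ) : ℤ)) = S := by
      apply hcovS
      rw [show (x₁ + ((nst * t : ℕ) : ℤ)) - x₁ = ((nst * t : ℕ) : ℤ) by ring]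
      exact_mod_cast Int.natCast_dvd_natCast.mpr ⟨t, rfl⟩
    have hsE : s ∈ univ.erase lst := (Finset.mem_sdiff.mp hsC).1
    have hmem : s ∈ cov' (x₁ + ((nst * t : ℕ) : ℤ)) := by
      simp only [hcov']
      exact Finset.mem_filter.mpr ⟨hsE, hdvd⟩
    rw [h1] at hmem
    exact (Finset.mem_sdiff.mp hsC).2 hmem
  have hprodphase : ∀ y : ℤ, (∀ s ∈ C, ¬ (n s : ℤ) ∣ y - a s) →
      (∏ s ∈ C, (1 - EE (((a s : ℚ) - (y : ℚ)) / (n s : ℚ))))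
        = (-2 * Complex.I) ^ C.card
          * Complex.exp ((Real.pi : ℂ) * Complex.I * ((F y : ℚ) : ℂ))
          * ((∏ s ∈ C, Real.sin (Real.pi *
              ((Int.fract (((a s : ℚ) - (y : ℚ)) / (n s : ℚ)) : ℚ) : ℝ))) : ℂ) := by
    intro y hy
    have h1 : ∀ s ∈ C, (1 - EE (((a s : ℚ) - (y : ℚ)) / (n s : ℚ)))
        = (-2 * Complex.I)
          * Complex.exp ((Real.pi : ℂ) * Complex.I
              * ((Int.fract (((a s : ℚ) - (y : ℚ)) / (n s : ℚ)) : ℚ) : ℂ))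
          * ((Real.sin (Real.pi
              * ((Int.fract (((a s : ℚ) - (y : ℚ)) / (n s : ℚ)) : ℚ) : ℝ)) : ℝ) : ℂ) :=
      fun s _ => one_sub_EE _
    rw [Finset.prod_congr rfl h1, Finset.prod_mul_distrib, Finset.prod_mul_distrib,
      Finset.prod_const, ← Complex.exp_sum]
    have e1 : (∑ s ∈ C, (Real.pi:ℂ) * Complex.I
          * ((Int.fract (((a s : ℚ) - (y : ℚ)) / (n s : ℚ)) : ℚ) : ℂ))
        = (Real.pi : ℂ) * Complex.I * ((F y : ℚ) : ℂ) := by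
      simp only [hF]
      push_cast
      rw [Finset.mul_sum]
    rw [e1]
  have hsinpos : ∀ y : ℤ, (∀ s ∈ C, ¬ (n s : ℤ) ∣ y - a s) →
      0 < ∏ s ∈ C, Real.sin (Real.pi *
          ((Int.fract (((a s : ℚ) - (y : ℚ)) / (n s : ℚ)) : ℚ) : ℝ)) := by
    intro y hy
    apply Finset.prod_pos
    intro s hs
    have harg : ((a s : ℚ) - (y : ℚ)) = (((a s - y : ℤ)) : ℚ) := by push_cast; ring
    have hfr0 : Int.fract (((a s : ℚ) - (y : ℚ)) / (n s : ℚ)) ≠ 0 := by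
      rw [harg]
      intro hc
      have h2 := (fract_div_eq_zero_iff (a s - y) (n s) (hn s)).mp hc
      exact hy s hs (dvd_sub_comm.mp h2)
    have hfr1 : Int.fract (((a s : ℚ) - (y : ℚ)) / (n s : ℚ)) < 1 := Int.fract_lt_one _
    have hfrpos : (0:ℚ) < Int.fract (((a s : ℚ) - (y : ℚ)) / (n s : ℚ)) :=
      lt_of_le_of_ne (Int.fract_nonneg _) (Ne.symm hfr0)
    apply Real.sin_pos_of_pos_of_lt_pi
    · apply mul_pos Real.pi_pos
      exact_mod_cast hfrpos
    · have h3 : ((Int.fract (((a s : ℚ) - (y : ℚ)) / (n s : ℚ)) : ℚ) : ℝ) < 1 := by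
        exact_mod_cast hfr1
      calc Real.pi * _ < Real.pi * 1 := by
            exact mul_lt_mul_of_pos_left h3 Real.pi_pos
      _ = Real.pi := mul_one _
  have hzero : ∀ x ∈ range N, x ∉ (range N).filter (fun x => nst ∣ x) →
      (∏ s ∈ C, (1 - EE (((a s : ℚ) - ((x₁:ℚ) + (x:ℚ))) / (n s : ℚ)))) * EE θ ^ x = 0 := by
    intro x hx hnx
    have hndvd : ¬ nst ∣ x := fun hc => hnx (Finset.mem_filter.mpr ⟨hx, hc⟩)
    have h2 : ∃ s ∈ C, (n s : ℤ) ∣ (x₁ + (x : ℤ)) - a s := by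
      by_contra hno
      push_neg at hno
      have h3 := hmiss (x₁ + (x : ℤ)) hno
      rw [show (x₁ + (x : ℤ)) - x₁ = (x : ℤ) by ring] at h3
      exact hndvd (Int.natCast_dvd_natCast.mp (by exact_mod_cast h3))
    obtain ⟨s, hsC, hsd⟩ := h2
    have hnsQ : (n s : ℚ) ≠ 0 := by exact_mod_cast (hn s).ne'
    have hfac : (1 - EE (((a s : ℚ) - ((x₁:ℚ) + (x:ℚ))) / (n s : ℚ))) = 0 := by
      obtain ⟨c, hc⟩ := hsd
      have harg : ((a s : ℚ) - ((x₁:ℚ) + (x:ℚ))) / (n s : ℚ) = ((-c : ℤ) : ℚ) := by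
        have h5 : ((a s : ℚ) - ((x₁:ℚ) + (x:ℚ))) = (n s : ℚ) * ((-c : ℤ) : ℚ) := by
          have h6 : (((x₁ + (x : ℤ)) - a s : ℤ) : ℚ) = (((n s : ℤ) * c : ℤ) : ℚ) := by
            exact_mod_cast hc
          push_cast at h6 ⊢
          linarith
        rw [h5, mul_comm, mul_div_assoc, div_self hnsQ, mul_one]
      rw [harg, EE_intCast, sub_self]
    rw [Finset.prod_eq_zero hsC hfac, zero_mul]
  have hbij : ∑ x ∈ (range N).filter (fun x => nst ∣ x),
      (∏ s ∈ C, (1 - EE (((a s : ℚ) - ((x₁:ℚ) + (x:ℚ))) / (n s : ℚ)))) * EE θ ^ x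
      = ∑ t ∈ range D,
        (∏ s ∈ C, (1 - EE (((a s : ℚ) - ((x₁:ℚ) + ((nst * t : ℕ):ℚ))) / (n s : ℚ))))
          * EE θ ^ (nst * t) := by
    refine Finset.sum_nbij' (fun x => x / nst) (fun t => nst * t) ?_ ?_ ?_ ?_ ?_
    · intro x hx
      obtain ⟨hx1, hx2⟩ := Finset.mem_filter.mp hx
      rw [Finset.mem_range] at hx1
      obtain ⟨c, rfl⟩ := hx2
      show nst * c / nst ∈ range D
      rw [Finset.mem_range, Nat.mul_div_cancel_left c hnst0]
      rw [hND] at hx1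
      exact Nat.lt_of_mul_lt_mul_left hx1
    · intro t ht
      rw [Finset.mem_range] at ht
      show nst * t ∈ (range N).filter (fun x => nst ∣ x)
      refine Finset.mem_filter.mpr ⟨?_, ⟨t, rfl⟩⟩
      rw [Finset.mem_range, hND]
      exact (mul_lt_mul_iff_right₀ hnst0).mpr ht
    · intro x hx
      obtain ⟨_, hx2⟩ := Finset.mem_filter.mp hx
      show nst * (x / nst) = x
      exact Nat.mul_div_cancel' hx2
    · intro t _
      show nst * t / nst = t
      exact Nat.mul_div_cancel_left t hnst0
    · intro x hx
      obtain ⟨_, hx2⟩ := Finset.mem_filter.mp hx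
      obtain ⟨c, rfl⟩ := hx2
      simp only [Nat.mul_div_cancel_left c hnst0]
  have hEone : ∀ t : ℕ, EE θ ^ (nst * t) = 1 := by
    intro t
    rw [EE_pow]
    have h1 : ((nst / n lst : ℕ) : ℚ) * (n lst : ℚ) = (nst : ℚ) := by
      rw [Nat.cast_div hn₀nst hn0Q]
      field_simp
    have harg : ((nst * t : ℕ) : ℚ) * θ = (((nst / n lst * t * r : ℕ) : ℤ) : ℚ) := by
      rw [hθdef]
      simp only [Nat.cast_mul, Int.cast_mul, Int.cast_natCast]
      rw [← h1]
      field_simp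
      try ring
    rw [harg, EE_intCast]
  set R : ℕ → ℝ := fun t => ∏ s ∈ C, Real.sin (Real.pi *
      ((Int.fract (((a s : ℚ) - ((x₁ + ((nst * t : ℕ) : ℤ) : ℤ) : ℚ)) / (n s : ℚ)) : ℚ) : ℝ))
    with hR
  have hterm : ∀ t : ℕ,
      (∏ s ∈ C, (1 - EE (((a s : ℚ) - ((x₁:ℚ) + ((nst * t : ℕ):ℚ))) / (n s : ℚ))))
      = (-2 * Complex.I) ^ C.card
        * Complex.exp ((Real.pi : ℂ) * Complex.I * ((F x₁ : ℚ) : ℂ))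
        * ((R t : ℝ) : ℂ) := by
    intro t
    have hcast : ∀ s ∈ C, ((a s : ℚ) - ((x₁:ℚ) + ((nst * t : ℕ):ℚ))) / (n s : ℚ)
        = ((a s : ℚ) - ((x₁ + ((nst * t : ℕ) : ℤ) : ℤ) : ℚ)) / (n s : ℚ) := by
      intro s _
      congr 2
      push_cast
      ring
    rw [Finset.prod_congr rfl (fun s hs => by rw [hcast s hs])]
    rw [hprodphase (x₁ + ((nst * t : ℕ) : ℤ)) (hCmiss t), hFconst t]
    rw [← Complex.ofReal_prod]
  have hne0 : (∑ x ∈ range N,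
      (∏ s ∈ C, (1 - EE (((a s : ℚ) - ((x₁:ℚ) + (x:ℚ))) / (n s : ℚ)))) * EE θ ^ x) ≠ 0 := by
    rw [← Finset.sum_subset (Finset.filter_subset (fun x => nst ∣ x) (range N)) hzero]
    rw [hbij]
    have hterm2 : ∀ t ∈ range D,
        (∏ s ∈ C, (1 - EE (((a s : ℚ) - ((x₁:ℚ) + ((nst * t : ℕ):ℚ))) / (n s : ℚ))))
          * EE θ ^ (nst * t)
        = (-2 * Complex.I) ^ C.card
          * Complex.exp ((Real.pi : ℂ) * Complex.I * ((F x₁ : ℚ) : ℂ))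
          * ((R t : ℝ) : ℂ) := by
      intro t _
      rw [hterm t, hEone t, mul_one]
    rw [Finset.sum_congr rfl hterm2]
    rw [← Finset.mul_sum]
    apply mul_ne_zero
    · apply mul_ne_zero
      · apply pow_ne_zero
        intro hc
        rw [neg_mul, neg_eq_zero, mul_eq_zero] at hc
        rcases hc with h | h
        · norm_num at h
        · exact Complex.I_ne_zero h
      · exact Complex.exp_ne_zero _
    · rw [← Complex.ofReal_sum]
      rw [Complex.ofReal_ne_zero]
      apply ne_of_gt
      apply Finset.sum_pos
      · intro t _
        simp only [hR]
        exact hsinpos (x₁ + ((nst * t : ℕ) : ℤ)) (hCmiss t)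
      · exact Finset.nonempty_range_iff.mpr hD0.ne'
  rw [hexp] at hne0
  have hclassne : (∑ I ∈ C.powerset.filter
      (fun I => Int.fract (∑ s ∈ I, (1:ℚ) / (n s : ℚ)) = Int.fract θ),
      (-1:ℂ) ^ I.card * EE (∑ s ∈ I, ((a s : ℚ) - (x₁:ℚ)) / (n s : ℚ))) ≠ 0 := by
    intro hc
    rw [hc, mul_zero] at hne0
    exact hne0 rfl
  obtain ⟨I₀, hI₀mem, _⟩ := Finset.exists_ne_zero_of_sum_ne_zero hclassne
  obtain ⟨hI₀pow, hI₀fr⟩ := Finset.mem_filter.mp hI₀mem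
  have hI₀sub : I₀ ⊆ univ.erase lst :=
    subset_trans (Finset.mem_powerset.mp hI₀pow) Finset.sdiff_subset
  have hfθ : Int.fract θ = θ := by
    rw [Int.fract_eq_self, hθdef]
    constructor
    · positivity
    · rw [div_lt_one (by exact_mod_cast hn lst)]
      exact_mod_cast hr
  have hcovT : ∀ x : ℤ, m - 1 ≤ (((univ.erase lst).filter
      (fun s => (n s : ℤ) ∣ x - a s)).card) := by
    intro x
    have h1 := hcov x
    have h2 := hsplit x
    simp only [hcov'] at h2
    by_cases h : (n lst : ℤ) ∣ x - a lst
    · rw [if_pos h] at h2; omega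
    · rw [if_neg h] at h2; omega
  have hdic := dich n a N hdvdN hn hNpos (m-1) (univ.erase lst) hcovT I₀ hI₀sub
  have hfrI₀ : Int.fract (∑ s ∈ I₀, (1:ℚ) / (n s : ℚ)) = (r:ℚ) / (n lst : ℚ) := by
    rw [hI₀fr, hfθ, hθdef]
  have hseteq : ((univ.erase lst).powerset.filter
      (fun I => Int.fract (∑ s ∈ I, (1:ℚ) / (n s : ℚ))
        = Int.fract (∑ s ∈ I₀, (1:ℚ) / (n s : ℚ))))
      = ((univ.erase lst).powerset.filter
      (fun I => Int.fract (∑ s ∈ I, (1:ℚ) / (n s : ℚ)) = (r:ℚ) / (n lst : ℚ))) := by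
    apply Finset.filter_congr
    intro I _
    rw [hfrI₀]
  rw [hseteq] at hdic
  exact hdic
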